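/- Let m ≥ 1 and let T be a sign tree with m+1 leaves such that σ := perm(T) is alternating (a snake) and σ(m) > σ(m+1). Then the in-order sign list signs(T) alternates (every two consecutive entries differ) and its last entry is ⊖. -/

import Mathlib

set_option maxHeartbeats 1600000


def permDirectSum {p q : ℕ} (π : Equiv.Perm (Fin p)) (τ : Equiv.Perm (Fin q)) :
    Equiv.Perm (Fin (p + q)) :=
  finSumFinEquiv.symm.trans ((Equiv.sumCongr π τ).trans finSumFinEquiv)

def permSkewSum {p q : ℕ} (π : Equiv.Perm (Fin p)) (τ : Equiv.Perm (Fin q)) :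
    Equiv.Perm (Fin (p + q)) :=
  finSumFinEquiv.symm.trans ((Equiv.sumCongr π τ).trans
    ((Equiv.sumComm (Fin p) (Fin q)).trans (finSumFinEquiv.trans (finCongr (Nat.add_comm q p)))))

lemma ds_lt' {p q : ℕ} (π : Equiv.Perm (Fin p)) (τ : Equiv.Perm (Fin q)) (j : Fin p) :
    (permDirectSum π τ (Fin.castAdd q j) : ℕ) = π j := by simp [permDirectSum]

lemma ds_ge' {p q : ℕ} (π : Equiv.Perm (Fin p)) (τ : Equiv.Perm (Fin q)) (j : Fin q) :
    (permDirectSum π τ (Fin.natAdd p j) : ℕ) = p + τ j := by simp [permDirectSum]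

lemma ss_lt' {p q : ℕ} (π : Equiv.Perm (Fin p)) (τ : Equiv.Perm (Fin q)) (j : Fin p) :
    (permSkewSum π τ (Fin.castAdd q j) : ℕ) = q + π j := by simp [permSkewSum]; omega

lemma ss_ge' {p q : ℕ} (π : Equiv.Perm (Fin p)) (τ : Equiv.Perm (Fin q)) (j : Fin q) :
    (permSkewSum π τ (Fin.natAdd p j) : ℕ) = τ j := by simp [permSkewSum]

lemma ds_lt {p q : ℕ} (π : Equiv.Perm (Fin p)) (τ : Equiv.Perm (Fin q))
    (i : Fin (p + q)) (h : (i : ℕ) < p) :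
    (permDirectSum π τ i : ℕ) = π ⟨i, h⟩ := by
  have e : i = Fin.castAdd q ⟨i, h⟩ := by ext; rfl
  conv_lhs => rw [e]
  exact ds_lt' π τ _

lemma ds_ge {p q : ℕ} (π : Equiv.Perm (Fin p)) (τ : Equiv.Perm (Fin q))
    (i : Fin (p + q)) (h : p ≤ (i : ℕ)) :
    (permDirectSum π τ i : ℕ) = p + τ ⟨i - p, by omega⟩ := by
  have e : i = Fin.natAdd p ⟨i - p, by omega⟩ := by ext; simp; omega
  conv_lhs => rw [e]
  exact ds_ge' π τ _

lemma ss_lt {p q : ℕ} (π : Equiv.Perm (Fin p)) (τ : Equiv.Perm (Fin q))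
    (i : Fin (p + q)) (h : (i : ℕ) < p) :
    (permSkewSum π τ i : ℕ) = q + π ⟨i, h⟩ := by
  have e : i = Fin.castAdd q ⟨i, h⟩ := by ext; rfl
  conv_lhs => rw [e]
  exact ss_lt' π τ _

lemma ss_ge {p q : ℕ} (π : Equiv.Perm (Fin p)) (τ : Equiv.Perm (Fin q))
    (i : Fin (p + q)) (h : p ≤ (i : ℕ)) :
    (permSkewSum π τ i : ℕ) = τ ⟨i - p, by omega⟩ := by
  have e : i = Fin.natAdd p ⟨i - p, by omega⟩ := by ext; simp; omega
  conv_lhs => rw [e]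
  exact ss_ge' π τ _

/-- A sign tree: a complete binary tree whose internal nodes carry a sign
(`true` = ⊕, `false` = ⊖). -/
inductive SignTree : Type
  | leaf : SignTree
  | node : Bool → SignTree → SignTree → SignTree

/-- Number of leaves of a sign tree. -/
def SignTree.leaves : SignTree → ℕ
  | .leaf => 1
  | .node _ L R => L.leaves + R.leaves

/-- The permutation encoded by a sign tree. -/
def SignTree.perm : (T : SignTree) → Equiv.Perm (Fin T.leaves)
  | .leaf => Equiv.refl _
  | .node s L R =>
      if s then permDirectSum L.perm R.perm else permSkewSum L.perm R.perm

/-- The in-order list of signs of a sign tree. -/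
def SignTree.signs : SignTree → List Bool
  | .leaf => []
  | .node s L R => L.signs ++ s :: R.signs

/-- The sign of the internal node where the paths to the `i`-th and `j`-th leaves
(1-based, `i < j`) separate. -/
def SignTree.meetSign : SignTree → ℕ → ℕ → Bool
  | .leaf, _, _ => true
  | .node s L R, i, j =>
      if j ≤ L.leaves then L.meetSign i j
      else if i ≤ L.leaves then s
      else R.meetSign (i - L.leaves) (j - L.leaves)


/-- A permutation is alternating (a snake) iff consecutive comparisons alternate. -/
def IsAlternating {n : ℕ} (σ : Equiv.Perm (Fin n)) : Prop :=
  ∀ i : ℕ, ∀ h2 : i + 2 < n,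
    (σ ⟨i, by omega⟩ < σ ⟨i + 1, by omega⟩ ↔ σ ⟨i + 2, h2⟩ < σ ⟨i + 1, by omega⟩)

lemma SignTree.leaves_pos (T : SignTree) : 1 ≤ T.leaves := by
  induction T with
  | leaf => simp [SignTree.leaves]
  | node s L R ihL ihR => simp [SignTree.leaves]; omega

lemma SignTree.signs_length (T : SignTree) : T.signs.length + 1 = T.leaves := by
  induction T with
  | leaf => simp [SignTree.leaves, SignTree.signs]
  | node s L R ihL ihR =>
      simp [SignTree.leaves, SignTree.signs]
      omega

lemma SignTree.key (T : SignTree) (i : ℕ) (h : i + 1 < T.leaves) :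
    ((T.perm ⟨i, by omega⟩ : Fin T.leaves) < T.perm ⟨i + 1, h⟩ ↔
      T.signs[i]'(by have := T.signs_length; omega) = true) := by
  induction T generalizing i with
  | leaf => simp [SignTree.leaves] at h
  | node s L R ihL ihR =>
      have hL := L.leaves_pos
      have hR := R.leaves_pos
      have hLs := L.signs_length
      have hRs := R.signs_length
      have hb : i + 1 < L.leaves + R.leaves := by simpa [SignTree.leaves] using h
      cases s with
      | true =>
        show permDirectSum L.perm R.perm ⟨i, by omega⟩ < permDirectSum L.perm R.perm ⟨i+1, by omega⟩ ↔
          (L.signs ++ true :: R.signs)[i]'(by simp; omega) = true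
        rw [Fin.lt_def]
        rcases lt_trichotomy (i + 1) L.leaves with hc | hc | hc
        · rw [ds_lt L.perm R.perm ⟨i, by omega⟩ (by simp; omega),
              ds_lt L.perm R.perm ⟨i+1, by omega⟩ (by simp; omega)]
          simp only [Fin.val_mk]
          rw [List.getElem_append_left (by omega)]
          rw [← ihL i hc, Fin.lt_def]
        · rw [ds_lt L.perm R.perm ⟨i, by omega⟩ (by simp; omega),
              ds_ge L.perm R.perm ⟨i+1, by omega⟩ (by simp; omega)]
          simp only [Fin.val_mk]
          rw [List.getElem_append_right (by omega)]
          simp only [show i - L.signs.length = 0 by omega, List.getElem_cons_zero]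
          have := (L.perm ⟨i, by omega⟩).isLt
          simp only [iff_true]
          omega
        · rw [ds_ge L.perm R.perm ⟨i, by omega⟩ (by simp; omega),
              ds_ge L.perm R.perm ⟨i+1, by omega⟩ (by simp; omega)]
          simp only [Fin.val_mk]
          have h2 : (i - L.leaves) + 1 < R.leaves := by omega
          rw [List.getElem_append_right (by omega)]
          simp only [show i - L.signs.length = (i - L.leaves) + 1 by omega,
            List.getElem_cons_succ]
          have e2 : (⟨(⟨i, by omega⟩ : Fin (L.leaves + R.leaves)).1 - L.leaves, by simp; omega⟩ : Fin R.leaves) = ⟨i - L.leaves, by omega⟩ := by ext; simp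
          have e3 : (⟨(⟨i+1, by omega⟩ : Fin (L.leaves + R.leaves)).1 - L.leaves, by simp; omega⟩ : Fin R.leaves) = ⟨(i - L.leaves) + 1, h2⟩ := by ext; simp; omega
          rw [e2, e3]
          rw [← ihR _ h2, Fin.lt_def]
          omega
      | false =>
        show permSkewSum L.perm R.perm ⟨i, by omega⟩ < permSkewSum L.perm R.perm ⟨i+1, by omega⟩ ↔
          (L.signs ++ false :: R.signs)[i]'(by simp; omega) = true
        rw [Fin.lt_def]
        rcases lt_trichotomy (i + 1) L.leaves with hc | hc | hc
        · rw [ss_lt L.perm R.perm ⟨i, by omega⟩ (by simp; omega),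
              ss_lt L.perm R.perm ⟨i+1, by omega⟩ (by simp; omega)]
          simp only [Fin.val_mk]
          rw [List.getElem_append_left (by omega)]
          rw [← ihL i hc, Fin.lt_def]
          omega
        · rw [ss_lt L.perm R.perm ⟨i, by omega⟩ (by simp; omega),
              ss_ge L.perm R.perm ⟨i+1, by omega⟩ (by simp; omega)]
          simp only [Fin.val_mk]
          rw [List.getElem_append_right (by omega)]
          simp only [show i - L.signs.length = 0 by omega, List.getElem_cons_zero]
          have := (R.perm ⟨(⟨i+1, by omega⟩ : Fin (L.leaves + R.leaves)).1 - L.leaves, by simp; omega⟩).isLt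
          simp only [Bool.false_eq_true, iff_false, not_lt]
          omega
        · rw [ss_ge L.perm R.perm ⟨i, by omega⟩ (by simp; omega),
              ss_ge L.perm R.perm ⟨i+1, by omega⟩ (by simp; omega)]
          simp only [Fin.val_mk]
          have h2 : (i - L.leaves) + 1 < R.leaves := by omega
          rw [List.getElem_append_right (by omega)]
          simp only [show i - L.signs.length = (i - L.leaves) + 1 by omega,
            List.getElem_cons_succ]
          have e2 : (⟨(⟨i, by omega⟩ : Fin (L.leaves + R.leaves)).1 - L.leaves, by simp; omega⟩ : Fin R.leaves) = ⟨i - L.leaves, by omega⟩ := by ext; simp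
          have e3 : (⟨(⟨i+1, by omega⟩ : Fin (L.leaves + R.leaves)).1 - L.leaves, by simp; omega⟩ : Fin R.leaves) = ⟨(i - L.leaves) + 1, h2⟩ := by ext; simp; omega
          rw [e2, e3]
          rw [← ihR _ h2, Fin.lt_def]

lemma SignTree.sign_ne (T : SignTree) (i : ℕ) (h2 : i + 2 < T.leaves)
    (halt : IsAlternating T.perm) :
    T.signs[i]'(by have := T.signs_length; omega) ≠
      T.signs[i + 1]'(by have := T.signs_length; omega) := by
  have k1 := T.key i (by omega)
  have k2 : T.perm ⟨i + 1, by omega⟩ < T.perm ⟨i + 2, by omega⟩ ↔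
      T.signs[i + 1]'(by have := T.signs_length; omega) = true := T.key (i + 1) h2
  have ha := halt i h2
  have hne : T.perm ⟨i + 1, by omega⟩ ≠ T.perm ⟨i + 2, by omega⟩ := by
    intro he
    have := T.perm.injective he
    simp only [Fin.mk.injEq] at this
    omega
  by_cases hb : T.signs[i]'(by have := T.signs_length; omega) = true
  · have h1 : T.perm ⟨i, by omega⟩ < T.perm ⟨i + 1, by omega⟩ := k1.mpr hb
    have hlt : T.perm ⟨i + 2, by omega⟩ < T.perm ⟨i + 1, by omega⟩ := ha.mp h1
    have h4 : T.signs[i + 1]'(by have := T.signs_length; omega) ≠ true :=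
      fun ht => lt_asymm hlt (k2.mpr ht)
    simp only [hb]
    exact fun he => h4 he.symm
  · have h1 : ¬ T.perm ⟨i, by omega⟩ < T.perm ⟨i + 1, by omega⟩ := fun hl => hb (k1.mp hl)
    have hlt : ¬ T.perm ⟨i + 2, by omega⟩ < T.perm ⟨i + 1, by omega⟩ := fun hl => h1 (ha.mpr hl)
    have h3 : T.perm ⟨i + 1, by omega⟩ < T.perm ⟨i + 2, by omega⟩ := by
      rcases lt_trichotomy (T.perm ⟨i + 1, by omega⟩) (T.perm ⟨i + 2, by omega⟩) with h | h | h
      · exact h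
      · exact absurd h hne
      · exact absurd h hlt
    have h4 : T.signs[i + 1]'(by have := T.signs_length; omega) = true := k2.mp h3
    simp only [h4]
    simp only [Bool.not_eq_true] at hb
    simp [hb]

lemma SignTree.last_sign (T : SignTree) (m : ℕ) (hm : 1 ≤ m) (hT : T.leaves = m + 1)
    (hlast : T.perm ⟨m, by omega⟩ < T.perm ⟨m - 1, by omega⟩) :
    T.signs[m - 1]'(by have := T.signs_length; omega) = false := by
  have k := T.key (m - 1) (by omega)
  have e : (⟨m - 1 + 1, by omega⟩ : Fin T.leaves) = ⟨m, by omega⟩ := by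
    ext; simp only [Fin.val_mk]; omega
  have h3 : ¬ (T.perm ⟨m - 1, by omega⟩ < T.perm ⟨m, by omega⟩) := lt_asymm hlast
  have h4 : T.signs[m - 1]'(by have := T.signs_length; omega) ≠ true := fun ht =>
    h3 (lt_of_lt_of_le (k.mpr ht) (le_of_eq (congrArg T.perm e)))
  simpa using h4

theorem stmt_14 (m : ℕ) (hm : 1 ≤ m) (T : SignTree) (hT : T.leaves = m + 1)
    (halt : IsAlternating T.perm)
    (hlast : T.perm ⟨m, by omega⟩ < T.perm ⟨m - 1, by omega⟩) :
    List.Chain' (· ≠ ·) T.signs ∧ T.signs.getLast? = some false := by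
  have hlen : T.signs.length = m := by have := T.signs_length; omega
  constructor
  · rw [List.Chain', List.isChain_iff_getElem]
    intro i hi
    exact T.sign_ne i (by omega) halt
  · rw [List.getLast?_eq_getElem?, List.getElem?_eq_getElem (by omega)]
    have := T.last_sign m hm hT hlast
    simp only [hlen]
    exact congrArg some this
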